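/- Let N ≥ 5, let a_1,…,a_n ∈ ℝ^N be distinct, let 4-N ≤ s < 0, and let φ_s(x) = Π_{i=1}^n |x-a_i|^{s/n}. Then -Δφ_s(x) = (s(2-N-s)/n) φ_s(x) Σ_{i=1}^n 1/|x-a_i|² + (s²/n²) φ_s(x) Σ_{1≤i<j≤n} |a_i-a_j|²/(|x-a_i|²|x-a_j|²) ≥ 0 for all x ∉ {a_1,…,a_n}; in particular φ_s is superharmonic away from the poles. -/

import Mathlib

open MeasureTheory

noncomputable def lap {N : ℕ} (f : EuclideanSpace ℝ (Fin N) → ℝ)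
    (x : EuclideanSpace ℝ (Fin N)) : ℝ :=
  ∑ i, fderiv ℝ (fun y => fderiv ℝ f y (EuclideanSpace.single i 1)) x
    (EuclideanSpace.single i 1)

/-!
With `p = s / n` we have `φ = exp (p ∑ᵢ log ‖x - aᵢ‖)`, so `∇φ = p φ V` for the field
`V x = ∑ᵢ wᵢ`, `wᵢ = (x - aᵢ) / ‖x - aᵢ‖²`, and `Δφ = div (p φ V) = p φ (p ‖V‖² + div V)`.
Each `wᵢ` has divergence `(N - 2) / ‖x - aᵢ‖²`. Since `wᵢ` is the image of `x - aᵢ` under the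
inversion `u ↦ u / ‖u‖²`, we get `‖wᵢ - wⱼ‖ = ‖aᵢ - aⱼ‖ / (‖x - aᵢ‖ ‖x - aⱼ‖)`, and the Lagrange
identity `‖∑ wᵢ‖² = n ∑ ‖wᵢ‖² - ∑_{i<j} ‖wᵢ - wⱼ‖²` produces the pairwise sum. Both coefficients
are nonnegative because `s < 0` and `2 - N - s ≤ -2`.
-/

open Real Finset Filter Topology

theorem sum_sum_eq_two_mul_sum_sum_ite_lt {ι : Type*} [Fintype ι] [LinearOrder ι]
    (f : ι → ι → ℝ) (hsymm : ∀ i j, f i j = f j i) (hdiag : ∀ i, f i i = 0) :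
    ∑ i, ∑ j, f i j = 2 * ∑ i, ∑ j, if i < j then f i j else 0 := by
  have hsplit (i j : ι) :
      f i j = (if i < j then f i j else 0) + (if j < i then f j i else 0) := by
    rcases lt_trichotomy i j with h | rfl | h
    · simp [h, h.asymm]
    · simp [hdiag]
    · simp [h, h.asymm, hsymm i j]
  calc ∑ i, ∑ j, f i j
      = ∑ i, ∑ j, (if i < j then f i j else 0) + ∑ i, ∑ j, (if j < i then f j i else 0) := by
        simp_rw [← sum_add_distrib, ← hsplit]
    _ = 2 * ∑ i, ∑ j, if i < j then f i j else 0 := by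
        rw [sum_comm (f := fun i j => if j < i then f j i else 0)]
        ring

theorem prod_rpow_eq_exp_mul_sum_log {ι : Type*} [Fintype ι] {r : ι → ℝ} (hr : ∀ i, 0 < r i)
    (p : ℝ) : ∏ i, r i ^ p = exp (p * ∑ i, log (r i)) := by
  rw [mul_sum, exp_sum]
  exact prod_congr rfl fun i _ => by rw [rpow_def_of_pos (hr i), mul_comm]

section InnerProductSpace

variable {E : Type*} [NormedAddCommGroup E] [InnerProductSpace ℝ E]

theorem norm_sum_sq_eq_card_mul_sum_sub {ι : Type*} [Fintype ι] [LinearOrder ι] (w : ι → E) :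
    ‖∑ i, w i‖ ^ 2 = Fintype.card ι * ∑ i, ‖w i‖ ^ 2
      - ∑ i, ∑ j, if i < j then ‖w i - w j‖ ^ 2 else 0 := by
  have hpairs : ∑ i, ∑ j, ‖w i - w j‖ ^ 2
      = 2 * (Fintype.card ι * ∑ i, ‖w i‖ ^ 2 - ‖∑ i, w i‖ ^ 2) := by
    simp only [norm_sub_sq_real, sum_sub_distrib, sum_add_distrib, ← inner_sum, ← sum_inner,
      ← mul_sum, sum_const, card_univ, real_inner_self_eq_norm_sq, nsmul_eq_mul]
    ring
  have := sum_sum_eq_two_mul_sum_sum_ite_lt (fun i j => ‖w i - w j‖ ^ 2)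
    (fun i j => by rw [norm_sub_rev]) (fun i => by simp)
  linarith

theorem hasFDerivAt_log_norm_sub {a x : E} (hx : x ≠ a) :
    HasFDerivAt (fun y => log ‖y - a‖) (innerSL ℝ ((‖x - a‖ ^ 2)⁻¹ • (x - a))) x := by
  have hr : ‖x - a‖ ^ 2 ≠ 0 := by positivity [sub_ne_zero.mpr hx]
  have h := (((hasFDerivAt_id x).sub_const a).norm_sq.log hr).const_mul (1 / 2 : ℝ)
  have hlog : (fun y => log ‖y - a‖) = fun y => 1 / 2 * log (‖id y - a‖ ^ 2) := by
    funext y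
    simp [log_pow]
  rw [hlog]
  refine h.congr_fderiv ?_
  ext v
  simp only [id_eq, map_sub, ContinuousLinearMap.comp_id, smul_apply, sub_apply,
    coe_innerSL_apply, nsmul_eq_mul, smul_eq_mul, map_smul]
  ring

theorem hasFDerivAt_inv_norm_sq_smul_sub {a x : E} (hx : x ≠ a) :
    HasFDerivAt (fun y => (‖y - a‖ ^ 2)⁻¹ • (y - a))
      ((‖x - a‖ ^ 2)⁻¹ • ContinuousLinearMap.id ℝ E
        - (2 / ‖x - a‖ ^ 4) • (innerSL ℝ (x - a)).smulRight (x - a)) x := by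
  have hr : ‖x - a‖ ^ 2 ≠ 0 := by positivity [sub_ne_zero.mpr hx]
  have hsub := (hasFDerivAt_id (𝕜 := ℝ) x).sub_const a
  have h := ((hasDerivAt_inv hr).comp_hasFDerivAt x hsub.norm_sq).smul hsub
  refine h.congr_fderiv ?_
  ext v
  simp only [id_eq, Function.comp_apply, map_sub, ContinuousLinearMap.comp_id, neg_smul,
    add_apply, smul_apply, neg_apply, sub_apply, ContinuousLinearMap.id_apply,
    ContinuousLinearMap.smulRight_apply, coe_innerSL_apply, nsmul_eq_mul, smul_eq_mul]
  module

theorem trace_inv_norm_sq_smul_id_sub [FiniteDimensional ℝ E] (u : E) :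
    LinearMap.trace ℝ E (((‖u‖ ^ 2)⁻¹ • ContinuousLinearMap.id ℝ E
        - (2 / ‖u‖ ^ 4) • (innerSL ℝ u).smulRight u : E →L[ℝ] E) : E →ₗ[ℝ] E)
      = (Module.finrank ℝ E - 2) / ‖u‖ ^ 2 := by
  rcases eq_or_ne u 0 with rfl | hu
  · simp
  simp only [ContinuousLinearMap.toLinearMap_sub, ContinuousLinearMap.toLinearMap_smul,
    ContinuousLinearMap.coe_id, ContinuousLinearMap.coe_smulRight,
    ContinuousLinearMap.toLinearMap_innerSL_apply, map_sub, map_smul, LinearMap.trace_id,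
    smul_eq_mul, LinearMap.trace_smulRight, innerₛₗ_apply_apply, real_inner_self_eq_norm_sq]
  field_simp

variable {ι : Type*} [Fintype ι]

/-- The logarithmic gradient `∇φ / φ` of `φ y = ∏ᵢ ‖y - aᵢ‖ ^ p`, up to the factor `p`. -/
noncomputable def poleField (a : ι → E) (y : E) : E := ∑ i, (‖y - a i‖ ^ 2)⁻¹ • (y - a i)

theorem hasFDerivAt_poleField {a : ι → E} {x : E} (hx : ∀ i, x ≠ a i) :
    HasFDerivAt (poleField a) (∑ i, ((‖x - a i‖ ^ 2)⁻¹ • ContinuousLinearMap.id ℝ E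
        - (2 / ‖x - a i‖ ^ 4) • (innerSL ℝ (x - a i)).smulRight (x - a i))) x :=
  HasFDerivAt.fun_sum fun i _ => hasFDerivAt_inv_norm_sq_smul_sub (hx i)

theorem hasFDerivAt_prod_norm_sub_rpow {a : ι → E} (p : ℝ) {x : E} (hx : ∀ i, x ≠ a i) :
    HasFDerivAt (fun y => ∏ i, ‖y - a i‖ ^ p)
      (innerSL ℝ ((p * ∏ i, ‖x - a i‖ ^ p) • poleField a x)) x := by
  have hlog : HasFDerivAt (fun y => p * ∑ i, log ‖y - a i‖)
      (p • innerSL ℝ (poleField a x)) x := by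
    have := HasFDerivAt.fun_sum fun i (_ : i ∈ univ) => hasFDerivAt_log_norm_sub (hx i)
    simpa [poleField, map_sum] using this.const_mul p
  have hnear : (fun y => ∏ i, ‖y - a i‖ ^ p) =ᶠ[𝓝 x]
      fun y => exp (p * ∑ i, log ‖y - a i‖) := by
    filter_upwards [eventually_all.mpr fun i => eventually_ne_nhds (hx i)] with y hy
    exact prod_rpow_eq_exp_mul_sum_log (fun i => norm_pos_iff.mpr (sub_ne_zero.mpr (hy i))) p
  refine (hlog.exp.congr_of_eventuallyEq hnear).congr_fderiv ?_
  rw [prod_rpow_eq_exp_mul_sum_log (fun i => norm_pos_iff.mpr (sub_ne_zero.mpr (hx i))) p,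
    map_smul, smul_smul, mul_comm]

theorem norm_poleField_sq [LinearOrder ι] {a : ι → E} {x : E} (hx : ∀ i, x ≠ a i) :
    ‖poleField a x‖ ^ 2 = Fintype.card ι * ∑ i, 1 / ‖x - a i‖ ^ 2
      - ∑ i, ∑ j, if i < j then ‖a i - a j‖ ^ 2 / (‖x - a i‖ ^ 2 * ‖x - a j‖ ^ 2) else 0 := by
  have hr (i : ι) : ‖x - a i‖ ≠ 0 := norm_ne_zero_iff.mpr (sub_ne_zero.mpr (hx i))
  have hinversion (i j : ι) :
      ‖(‖x - a i‖ ^ 2)⁻¹ • (x - a i) - (‖x - a j‖ ^ 2)⁻¹ • (x - a j)‖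
        = ‖a i - a j‖ / (‖x - a i‖ * ‖x - a j‖) := by
    have h := dist_div_norm_sq_smul (sub_ne_zero.mpr (hx i)) (sub_ne_zero.mpr (hx j)) 1
    simp only [one_div, inv_pow, one_pow, dist_eq_norm, sub_sub_sub_cancel_left] at h
    rw [h, norm_sub_rev (a j), div_eq_inv_mul]
  rw [poleField, norm_sum_sq_eq_card_mul_sum_sub]
  simp only [hinversion, norm_smul, norm_inv, norm_pow, norm_norm, div_pow, mul_pow]
  congr 2
  refine sum_congr rfl fun i _ => ?_
  field_simp [hr i]

end InnerProductSpace

theorem lap_eq_trace {N : ℕ} {f : EuclideanSpace ℝ (Fin N) → ℝ}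
    {g : EuclideanSpace ℝ (Fin N) → EuclideanSpace ℝ (Fin N)}
    {g' : EuclideanSpace ℝ (Fin N) →L[ℝ] EuclideanSpace ℝ (Fin N)}
    {x : EuclideanSpace ℝ (Fin N)}
    (hf : ∀ᶠ y in 𝓝 x, HasFDerivAt f (innerSL ℝ (g y)) y) (hg : HasFDerivAt g g' x) :
    lap f x = LinearMap.trace ℝ (EuclideanSpace ℝ (Fin N)) (g' : _ →ₗ[ℝ] _) := by
  rw [lap, LinearMap.trace_eq_sum_inner _ (EuclideanSpace.basisFun (Fin N) ℝ)]
  refine sum_congr rfl fun k _ => ?_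
  set e := EuclideanSpace.single k (1 : ℝ)
  have hnear : (fun y => fderiv ℝ f y e) =ᶠ[𝓝 x] fun y => inner ℝ (g y) e := by
    filter_upwards [hf] with y hy
    rw [hy.fderiv, innerSL_apply_apply]
  rw [hnear.fderiv_eq, (hg.inner ℝ (hasFDerivAt_const e x)).fderiv]
  simp [e, real_inner_comm]

theorem lap_prod_norm_sub_rpow {N : ℕ} {ι : Type*} [Fintype ι]
    (a : ι → EuclideanSpace ℝ (Fin N)) (p : ℝ) {x : EuclideanSpace ℝ (Fin N)}
    (hx : ∀ i, x ≠ a i) :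
    lap (fun y => ∏ i, ‖y - a i‖ ^ p) x = p * (∏ i, ‖x - a i‖ ^ p) *
      (p * ‖poleField a x‖ ^ 2 + (N - 2) * ∑ i, 1 / ‖x - a i‖ ^ 2) := by
  have hgrad : ∀ᶠ y in 𝓝 x, HasFDerivAt (fun y => ∏ i, ‖y - a i‖ ^ p)
      (innerSL ℝ ((p * ∏ i, ‖y - a i‖ ^ p) • poleField a y)) y := by
    filter_upwards [eventually_all.mpr fun i => eventually_ne_nhds (hx i)] with y hy
    exact hasFDerivAt_prod_norm_sub_rpow p hy
  have hdiv := ((hasFDerivAt_prod_norm_sub_rpow p hx).const_mul p).smul (hasFDerivAt_poleField hx)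
  rw [lap_eq_trace hgrad hdiv]
  simp only [ContinuousLinearMap.toLinearMap_add, ContinuousLinearMap.toLinearMap_smul,
    ContinuousLinearMap.toLinearMap_sum, ContinuousLinearMap.coe_smulRight, map_add, map_smul,
    map_sum, trace_inv_norm_sq_smul_id_sub, LinearMap.trace_smulRight, LinearMap.smul_apply,
    ContinuousLinearMap.toLinearMap_innerSL_apply, innerₛₗ_apply_apply,
    real_inner_self_eq_norm_sq, finrank_euclideanSpace_fin, smul_eq_mul,
    div_eq_mul_one_div (_ - 2 : ℝ), ← mul_sum]
  ring

theorem neg_lap_prod_norm_sub_rpow_div_card {N : ℕ} {ι : Type*} [Fintype ι] [LinearOrder ι]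
    (a : ι → EuclideanSpace ℝ (Fin N)) (s : ℝ) {x : EuclideanSpace ℝ (Fin N)}
    (hx : ∀ i, x ≠ a i) :
    -lap (fun y => ∏ i, ‖y - a i‖ ^ (s / Fintype.card ι)) x
      = (s * (2 - N - s) / Fintype.card ι) * (∏ i, ‖x - a i‖ ^ (s / Fintype.card ι))
          * (∑ i, 1 / ‖x - a i‖ ^ 2)
        + (s ^ 2 / (Fintype.card ι : ℝ) ^ 2) * (∏ i, ‖x - a i‖ ^ (s / Fintype.card ι))
          * ∑ i, ∑ j, if i < j then ‖a i - a j‖ ^ 2 / (‖x - a i‖ ^ 2 * ‖x - a j‖ ^ 2) else 0 := by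
  rw [lap_prod_norm_sub_rpow a _ hx, norm_poleField_sq hx]
  rcases eq_or_ne (Fintype.card ι : ℝ) 0 with hcard | hcard
  · simp [hcard]
  · field_simp
    ring

theorem multipolar_superharmonic_general (N n : ℕ)
    (a : Fin n → EuclideanSpace ℝ (Fin N))
    (s : ℝ) (hs1 : 4 - (N : ℝ) ≤ s) (hs2 : s < 0)
    (φs : EuclideanSpace ℝ (Fin N) → ℝ)
    (hφs : φs = fun x => ∏ i, ‖x - a i‖ ^ (s / (n : ℝ))) :
    ∀ x : EuclideanSpace ℝ (Fin N), x ∉ Set.range a →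
      (-lap φs x
        = (s * (2 - (N : ℝ) - s) / (n : ℝ)) * φs x * (∑ i, 1 / ‖x - a i‖ ^ 2)
          + (s ^ 2 / (n : ℝ) ^ 2) * φs x *
            ∑ i, ∑ j, if i < j then
              ‖a i - a j‖ ^ 2 / (‖x - a i‖ ^ 2 * ‖x - a j‖ ^ 2)
            else 0)
      ∧ 0 ≤ -lap φs x := by
  subst hφs
  intro x hx
  have hxa : ∀ i, x ≠ a i := fun i h => hx ⟨i, h.symm⟩
  have hformula := neg_lap_prod_norm_sub_rpow_div_card a s hxa
  rw [Fintype.card_fin] at hformula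
  refine ⟨hformula, hformula ▸ ?_⟩
  have hφ : 0 ≤ ∏ i, ‖x - a i‖ ^ (s / n) := prod_nonneg fun i _ => by positivity
  have hcoeff : 0 ≤ s * (2 - N - s) / n :=
    div_nonneg (mul_nonneg_of_nonpos_of_nonpos hs2.le (by linarith)) n.cast_nonneg
  have hpairs : 0 ≤ ∑ i, ∑ j, if i < j then
      ‖a i - a j‖ ^ 2 / (‖x - a i‖ ^ 2 * ‖x - a j‖ ^ 2) else 0 :=
    sum_nonneg fun i _ => sum_nonneg fun j _ => by split_ifs <;> positivity
  exact add_nonneg (mul_nonneg (mul_nonneg hcoeff hφ) (sum_nonneg fun i _ => by positivity))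
    (mul_nonneg (mul_nonneg (by positivity) hφ) hpairs)

/-- With equal weights and `4 - N ≤ s < 0`, `φ_s` is superharmonic away from
the poles, with the explicit formula for `-Δφ_s`. -/
theorem multipolar_superharmonic (N n : ℕ) (hN : 5 ≤ N) (hn : 2 ≤ n)
    (a : Fin n → EuclideanSpace ℝ (Fin N)) (ha : Function.Injective a)
    (s : ℝ) (hs1 : 4 - (N : ℝ) ≤ s) (hs2 : s < 0)
    (φs : EuclideanSpace ℝ (Fin N) → ℝ)
    (hφs : φs = fun x => ∏ i, ‖x - a i‖ ^ (s / (n : ℝ))) :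
    ∀ x : EuclideanSpace ℝ (Fin N), x ∉ Set.range a →
      (-lap φs x
        = (s * (2 - (N : ℝ) - s) / (n : ℝ)) * φs x * (∑ i, 1 / ‖x - a i‖ ^ 2)
          + (s ^ 2 / (n : ℝ) ^ 2) * φs x *
            ∑ i, ∑ j, if i < j then
              ‖a i - a j‖ ^ 2 / (‖x - a i‖ ^ 2 * ‖x - a j‖ ^ 2)
            else 0)
      ∧ 0 ≤ -lap φs x :=
  multipolar_superharmonic_general N n a s hs1 hs2 φs hφs
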